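/- If f ∈ ℂ[x^{±1}, y^{±1}] is (φ,h)-mutable for a mutation datum (φ,h) and f is normalized, then the mutation mut_{(φ,h)} f is normalized, provided h is normalized. -/

import Mathlib

/-!
A vertex `q` of the Newton polygon of `μ` is the strict maximum on `supp μ` of an additive map
`D : ℤ² → ℝ`, and after a small perturbation `D` is injective, i.e. a monomial order. Leading
exponents for `D` add under multiplication, and the leading exponent `w` of `h` is a vertex of
`newt h`, so `h` has leading coefficient `1`. Comparing `μ_k` with `h^k f_k` level by level, the
leading exponent of `f_k` is that of `μ_k` shifted by `-k • w`, with the same coefficient. Hence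
`r = q - φ(q) • w` carries the coefficient `μ_q`, and it is the strict maximum on `supp f` of the
twisted map `p ↦ D p + l(p) D w`: the twist puts every level `k` at height at most `D q`, with
equality only at `r`. So `r` is a vertex of `newt f` and `μ_q = f_r = 1`.
-/

noncomputable section

/-- The ring of Laurent polynomials in two variables over ℂ. -/
abbrev A2 : Type := AddMonoidAlgebra ℂ (ℤ × ℤ)

def emb (p : ℤ × ℤ) : ℝ × ℝ := ((p.1 : ℝ), (p.2 : ℝ))

def newt (f : A2) : Set (ℝ × ℝ) := convexHull ℝ (emb '' (f.coeff.support : Set (ℤ × ℤ)))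

def IsNormalized (f : A2) : Prop :=
  ∀ p : ℤ × ℤ, emb p ∈ Set.extremePoints ℝ (newt f) → f.coeff p = 1

/-- The part of `f` on the level set `(φ = k)` of the affine-linear function
`φ(p) = c + l(p)`. -/
def part (c : ℤ) (l : (ℤ × ℤ) →ₗ[ℤ] ℤ) (f : A2) (k : ℤ) : A2 :=
  AddMonoidAlgebra.ofCoeff (Finsupp.filter (fun p : ℤ × ℤ => c + l p = k) f.coeff)

def IsStrictMaxOn {α β : Type*} [Preorder β] (f : α → β) (s : Set α) (a : α) : Prop :=
  ∀ b ∈ s, b ≠ a → f b < f a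

section Convex

variable {E : Type*} [NormedAddCommGroup E] [NormedSpace ℝ E] {s : Set E} {x : E}

lemma mem_exposedPoints_convexHull_of_isStrictMaxOn (hx : x ∈ s) (l : StrongDual ℝ E)
    (hl : IsStrictMaxOn l s x) : x ∈ (convexHull ℝ s).exposedPoints ℝ := by
  refine ⟨subset_convexHull ℝ s hx, l, fun y hy => ?_⟩
  rcases (s \ {x}).eq_empty_or_nonempty with ht | ht
  · have hyx : y ∈ ({x} : Set E) := by
      rw [← convexHull_singleton x (𝕜 := ℝ)]
      exact convexHull_mono (Set.sdiff_eq_empty.1 ht) hy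
    simp [Set.mem_singleton_iff.1 hyx]
  · have hys : y ∈ convexJoin ℝ {x} (convexHull ℝ (s \ {x})) := by
      rw [← convexHull_insert ht]
      exact convexHull_mono (fun z hz => by by_cases h : z = x <;> simp [h, hz]) hy
    obtain ⟨x', hx', z, hz, a, b, ha, hb, hab, rfl⟩ := mem_convexJoin.1 hys
    rw [Set.mem_singleton_iff] at hx'
    subst x'
    have hlz : l z < l x :=
      convexHull_min (fun z hz => hl z hz.1 hz.2) (convex_halfSpace_lt l.isLinear _) hz
    have hly : l (a • x + b • z) = l x - b * (l x - l z) := by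
      simp only [map_add, map_smul, smul_eq_mul]
      linear_combination l x * hab
    have hgap : 0 < l x - l z := sub_pos.2 hlz
    rw [hly]
    refine ⟨by nlinarith, fun hle => ?_⟩
    obtain rfl : b = 0 := by nlinarith
    obtain rfl : a = 1 := by linarith
    simp

lemma Set.Finite.mem_extremePoints_convexHull_iff (hs : s.Finite) :
    x ∈ (convexHull ℝ s).extremePoints ℝ ↔ x ∈ s ∧ ∃ l : StrongDual ℝ E, IsStrictMaxOn l s x := by
  refine ⟨fun hx => ⟨extremePoints_convexHull_subset hx, ?_⟩, fun ⟨hxs, l, hl⟩ =>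
    exposedPoints_subset_extremePoints (mem_exposedPoints_convexHull_of_isStrictMaxOn hxs l hl)⟩
  have hxt : x ∉ convexHull ℝ (s \ {x}) := fun hmem =>
    ((convex_convexHull ℝ s).mem_extremePoints_iff_mem_sdiff_convexHull_sdiff.1 hx).2
      (convexHull_mono (Set.sdiff_subset_sdiff_left (subset_convexHull ℝ s)) hmem)
  obtain ⟨l, u, hlu, hux⟩ := geometric_hahn_banach_closed_point (convex_convexHull ℝ _)
    (hs.sdiff.isCompact_convexHull (𝕜 := ℝ)).isClosed hxt
  exact ⟨l, fun y hy hyx => (hlu y (subset_convexHull ℝ _ ⟨hy, hyx⟩)).trans hux⟩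

end Convex

lemma exists_injective_isStrictMaxOn {G : Type*} [AddCommGroup G] [Countable G] {ι : G →+ ℝ}
    (hι : Function.Injective ι) {S : Set G} (hS : S.Finite) {D : G →+ ℝ} {q : G}
    (hD : IsStrictMaxOn D S q) : ∃ D' : G →+ ℝ, Function.Injective D' ∧ IsStrictMaxOn D' S q := by
  -- `D + t • ι` kills a nonzero `g` only for `t = -D g / ι g`.
  have hbad : (Set.range fun g => -D g / ι g).Countable := Set.countable_range _
  have hgood : ∀ᶠ t in nhds (0 : ℝ), IsStrictMaxOn ⇑(D + t • ι) S q := by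
    refine (hS.eventually_all (p := fun b t => b ≠ q → (D + t • ι) b < (D + t • ι) q)).2
      fun b hb => ?_
    by_cases hbq : b = q
    · exact Filter.Eventually.of_forall fun _ h => absurd hbq h
    have hcont : ∀ g : G, Continuous fun t : ℝ => D g + t * ι g := fun g => by fun_prop
    refine ((hcont b).continuousAt.eventually_lt (hcont q).continuousAt ?_).mono
      fun t h _ => by simpa using h
    simpa using hD b hb hbq
  obtain ⟨t, hbad_t, hgood_t⟩ := (hbad.dense_compl ℝ).inter_nhds_nonempty hgood
  refine ⟨D + t • ι, (injective_iff_map_eq_zero _).2 fun g hg => ?_, hgood_t⟩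
  by_contra hg0
  have hιg : ι g ≠ 0 := (map_ne_zero_iff ι hι).2 hg0
  refine hbad_t ⟨g, ?_⟩
  simp only [AddMonoidHom.add_apply, AddMonoidHom.smul_apply, smul_eq_mul] at hg
  field_simp
  linarith

def embAddHom : ℤ × ℤ →+ ℝ × ℝ := (Int.castAddHom ℝ).prodMap (Int.castAddHom ℝ)

lemma emb_injective : Function.Injective emb := fun p q hpq => by
  simp only [emb, Prod.ext_iff, Int.cast_inj] at hpq
  exact Prod.ext hpq.1 hpq.2

lemma exists_injective_addMonoidHom_int_prod : ∃ ι : ℤ × ℤ →+ ℝ, Function.Injective ι := by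
  refine ⟨(Int.castAddHom ℝ).comp (AddMonoidHom.fst ℤ ℤ) +
    Real.sqrt 2 • (Int.castAddHom ℝ).comp (AddMonoidHom.snd ℤ ℤ),
    (injective_iff_map_eq_zero _).2 fun ⟨m, n⟩ hmn => ?_⟩
  simp only [AddMonoidHom.add_apply, AddMonoidHom.smul_apply, AddMonoidHom.coe_comp,
    Function.comp_apply, AddMonoidHom.coe_fst, AddMonoidHom.coe_snd, smul_eq_mul] at hmn
  obtain rfl : n = 0 := by
    by_contra hn
    exact ((irrational_sqrt_two.mul_intCast hn).intCast_add m).ne_zero hmn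
  simp_all

lemma AddMonoidHom.exists_strongDual_apply_emb (D : ℤ × ℤ →+ ℝ) :
    ∃ Ψ : StrongDual ℝ (ℝ × ℝ), ∀ p, Ψ (emb p) = D p := by
  refine ⟨D (1, 0) • ContinuousLinearMap.fst ℝ ℝ ℝ + D (0, 1) • ContinuousLinearMap.snd ℝ ℝ ℝ,
    fun p => ?_⟩
  have hp : p = p.1 • ((1, 0) : ℤ × ℤ) + p.2 • ((0, 1) : ℤ × ℤ) := by ext <;> simp
  conv_rhs => rw [hp, map_add, map_zsmul, map_zsmul]
  simp [emb, zsmul_eq_mul, mul_comm]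

lemma mem_extremePoints_convexHull_emb_iff (S : Finset (ℤ × ℤ)) (q : ℤ × ℤ) :
    emb q ∈ (convexHull ℝ (emb '' S)).extremePoints ℝ ↔
      q ∈ S ∧ ∃ D : ℤ × ℤ →+ ℝ, IsStrictMaxOn D S q := by
  rw [((S.finite_toSet).image emb).mem_extremePoints_convexHull_iff,
    emb_injective.mem_set_image, Finset.mem_coe]
  refine and_congr_right fun _ => ⟨fun ⟨Ψ, hΨ⟩ => ⟨(Ψ : ℝ × ℝ →+ ℝ).comp embAddHom, ?_⟩,
    fun ⟨D, hD⟩ => ?_⟩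
  · exact fun b hb hbq => hΨ _ (Set.mem_image_of_mem _ hb) (emb_injective.ne hbq)
  · obtain ⟨Ψ, hΨ⟩ := D.exists_strongDual_apply_emb
    refine ⟨Ψ, ?_⟩
    rintro _ ⟨b, hb, rfl⟩ hbq
    rw [hΨ, hΨ]
    exact hD b hb (fun h => hbq (h ▸ rfl))

lemma exists_injective_of_mem_extremePoints_convexHull_emb {S : Finset (ℤ × ℤ)} {q : ℤ × ℤ}
    (hq : emb q ∈ (convexHull ℝ (emb '' S)).extremePoints ℝ) :
    q ∈ S ∧ ∃ D : ℤ × ℤ →+ ℝ, Function.Injective D ∧ IsStrictMaxOn D S q := by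
  obtain ⟨hqS, D, hD⟩ := (mem_extremePoints_convexHull_emb_iff S q).1 hq
  obtain ⟨ι, hι⟩ := exists_injective_addMonoidHom_int_prod
  exact ⟨hqS, exists_injective_isStrictMaxOn hι S.finite_toSet hD⟩

namespace AddMonoidAlgebra

variable {R G : Type*} [Semiring R] [AddCommGroup G]

def IsLeadingExp (D : G →+ ℝ) (f : AddMonoidAlgebra R G) (a : G) : Prop :=
  a ∈ f.coeff.support ∧ ∀ b ∈ f.coeff.support, D b ≤ D a

variable {D : G →+ ℝ} {f g : AddMonoidAlgebra R G} {a b : G}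

lemma exists_isLeadingExp (hf : f ≠ 0) : ∃ a, IsLeadingExp D f a := by
  obtain ⟨a, ha, hmax⟩ := Finset.exists_max_image f.coeff.support D
    (Finsupp.support_nonempty_iff.2 fun h0 => hf (coeff_eq_zero.1 h0))
  exact ⟨a, ha, hmax⟩

lemma IsLeadingExp.ne_zero (ha : IsLeadingExp D f a) : f ≠ 0 := by
  rintro rfl
  simp [IsLeadingExp] at ha

lemma IsLeadingExp.unique (hD : Function.Injective D) (ha : IsLeadingExp D f a)
    (hb : IsLeadingExp D f b) : a = b :=
  hD ((hb.2 a ha.1).antisymm (ha.2 b hb.1))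

lemma IsLeadingExp.isStrictMaxOn (hD : Function.Injective D) (ha : IsLeadingExp D f a) :
    IsStrictMaxOn D f.coeff.support a :=
  fun b hb hba => (ha.2 b hb).lt_of_ne (hD.ne hba)

lemma IsLeadingExp.uniqueAdd (hD : Function.Injective D) (ha : IsLeadingExp D f a)
    (hb : IsLeadingExp D g b) : UniqueAdd f.coeff.support g.coeff.support a b := by
  intro x y hx hy hxy
  have hsum : D x + D y = D a + D b := by rw [← map_add, hxy, map_add]
  have hxa := ha.2 x hx
  have hyb := hb.2 y hy
  exact ⟨hD (by linarith), hD (by linarith)⟩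

lemma coeff_mul_add_of_isLeadingExp (hD : Function.Injective D) (ha : IsLeadingExp D f a)
    (hb : IsLeadingExp D g b) : (f * g).coeff (a + b) = f.coeff a * g.coeff b :=
  coeff_mul_add_of_uniqueAdd (ha.uniqueAdd hD hb)

lemma IsLeadingExp.mul [NoZeroDivisors R] (hD : Function.Injective D) (ha : IsLeadingExp D f a)
    (hb : IsLeadingExp D g b) : IsLeadingExp D (f * g) (a + b) := by
  classical
  refine ⟨?_, fun x hx => ?_⟩
  · rw [Finsupp.mem_support_iff, coeff_mul_add_of_isLeadingExp hD ha hb]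
    exact mul_ne_zero (Finsupp.mem_support_iff.1 ha.1) (Finsupp.mem_support_iff.1 hb.1)
  · obtain ⟨y, hy, z, hz, rfl⟩ := Finset.mem_add.1 (support_coeff_mul_subset f g hx)
    rw [map_add, map_add]
    exact add_le_add (ha.2 y hy) (hb.2 z hz)

lemma IsLeadingExp.pow [NoZeroDivisors R] (hD : Function.Injective D) (ha : IsLeadingExp D f a)
    (n : ℕ) : IsLeadingExp D (f ^ n) (n • a) ∧ (f ^ n).coeff (n • a) = f.coeff a ^ n := by
  induction n with
  | zero =>
    have : Nontrivial R := ⟨⟨f.coeff a, 0, Finsupp.mem_support_iff.1 ha.1⟩⟩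
    refine ⟨⟨?_, fun x hx => ?_⟩, ?_⟩ <;> simp_all [one_def]
  | succ n ih =>
    rw [pow_succ, succ_nsmul, pow_succ, coeff_mul_add_of_isLeadingExp hD ih.1 ha, ih.2]
    exact ⟨ih.1.mul hD ha, rfl⟩

lemma isLeadingExp_pow_mul_iff [NoZeroDivisors R] (hD : Function.Injective D)
    {h : AddMonoidAlgebra R G} {w : G} (hw : IsLeadingExp D h w) (n : ℕ) :
    IsLeadingExp D (h ^ n * g) (n • w + a) ↔ IsLeadingExp D g a := by
  refine ⟨fun hna => ?_, fun ha => ((hw.pow hD n).1.mul hD ha)⟩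
  obtain ⟨a', ha'⟩ := exists_isLeadingExp (D := D) (right_ne_zero_of_mul hna.ne_zero)
  rwa [add_left_cancel (hna.unique hD ((hw.pow hD n).1.mul hD ha'))]

lemma coeff_pow_mul_of_isLeadingExp [NoZeroDivisors R] (hD : Function.Injective D)
    {h : AddMonoidAlgebra R G} {w : G} (hw : IsLeadingExp D h w) (ha : IsLeadingExp D g a) (n : ℕ) :
    (h ^ n * g).coeff (n • w + a) = h.coeff w ^ n * g.coeff a := by
  rw [coeff_mul_add_of_isLeadingExp hD (hw.pow hD n).1 ha, (hw.pow hD n).2]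

end AddMonoidAlgebra

open AddMonoidAlgebra

lemma IsNormalized.coeff_eq_one {g : A2} (hg : IsNormalized g) {p : ℤ × ℤ}
    (hp : p ∈ g.coeff.support) {D : ℤ × ℤ →+ ℝ} (hD : IsStrictMaxOn D g.coeff.support p) :
    g.coeff p = 1 :=
  hg p ((mem_extremePoints_convexHull_emb_iff _ p).2 ⟨hp, D, hD⟩)

section Mutation

variable {c : ℤ} {l : (ℤ × ℤ) →ₗ[ℤ] ℤ}

lemma coeff_part (g : A2) (k : ℤ) (p : ℤ × ℤ) :
    (part c l g k).coeff p = if c + l p = k then g.coeff p else 0 := by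
  simp [part, Finsupp.filter_apply]

lemma mem_support_part {g : A2} {k : ℤ} {p : ℤ × ℤ} :
    p ∈ (part c l g k).coeff.support ↔ p ∈ g.coeff.support ∧ c + l p = k := by
  simp [part, Finsupp.support_filter]

lemma coeff_part_of_mem_support {g : A2} {k : ℤ} {p : ℤ × ℤ}
    (hp : p ∈ (part c l g k).coeff.support) : (part c l g k).coeff p = g.coeff p := by
  rw [coeff_part, if_pos (mem_support_part.1 hp).2]

/-- `μ = mut_{(φ,h)} f` for `φ = c + l`, read off level by level. -/
def IsMutation (c : ℤ) (l : (ℤ × ℤ) →ₗ[ℤ] ℤ) (h f μ : A2) : Prop :=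
  (∀ k : ℤ, 0 ≤ k → part c l μ k = h ^ k.toNat * part c l f k) ∧
    ∀ k : ℤ, k < 0 → h ^ (-k).toNat * part c l μ k = part c l f k

variable {h f μ : A2} {D : ℤ × ℤ →+ ℝ} {w : ℤ × ℤ}

lemma IsMutation.isLeadingExp_part_iff (hμ : IsMutation c l h f μ) (hD : Function.Injective D)
    (hw : IsLeadingExp D h w) (k : ℤ) (a : ℤ × ℤ) :
    IsLeadingExp D (part c l μ k) (a + k • w) ↔ IsLeadingExp D (part c l f k) a := by
  rcases le_or_gt 0 k with hk | hk
  · obtain ⟨n, rfl⟩ := Int.eq_ofNat_of_zero_le hk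
    rw [hμ.1 n hk, Int.toNat_natCast, natCast_zsmul, add_comm]
    exact isLeadingExp_pow_mul_iff hD hw n
  · obtain ⟨n, rfl⟩ := Int.exists_eq_neg_ofNat hk.le
    rw [← hμ.2 _ hk, neg_neg, Int.toNat_natCast]
    conv_rhs => rw [show a = n • w + (a + (-(n : ℤ)) • w) by rw [neg_zsmul, natCast_zsmul]; abel]
    exact (isLeadingExp_pow_mul_iff hD hw n).symm

lemma IsMutation.coeff_part_add_zsmul (hμ : IsMutation c l h f μ) (hD : Function.Injective D)
    (hw : IsLeadingExp D h w) (hw1 : h.coeff w = 1) {k : ℤ} {a : ℤ × ℤ}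
    (ha : IsLeadingExp D (part c l f k) a) :
    (part c l μ k).coeff (a + k • w) = (part c l f k).coeff a := by
  rcases le_or_gt 0 k with hk | hk
  · obtain ⟨n, rfl⟩ := Int.eq_ofNat_of_zero_le hk
    rw [hμ.1 n hk, Int.toNat_natCast, natCast_zsmul, add_comm,
      coeff_pow_mul_of_isLeadingExp hD hw ha, hw1, one_pow, one_mul]
  · obtain ⟨n, rfl⟩ := Int.exists_eq_neg_ofNat hk.le
    have hb := (hμ.isLeadingExp_part_iff hD hw _ a).2 ha
    rw [← hμ.2 _ hk, neg_neg, Int.toNat_natCast]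
    conv_rhs => rw [show a = n • w + (a + (-(n : ℤ)) • w) by rw [neg_zsmul, natCast_zsmul]; abel]
    rw [coeff_pow_mul_of_isLeadingExp hD hw hb, hw1, one_pow, one_mul]

lemma IsMutation.coeff_sub_zsmul (hμ : IsMutation c l h f μ) (hD : Function.Injective D)
    (hw : IsLeadingExp D h w) (hw1 : h.coeff w = 1) {q : ℤ × ℤ} (hqμ : q ∈ μ.coeff.support)
    (hq : IsStrictMaxOn D μ.coeff.support q) :
    f.coeff (q - (c + l q) • w) = μ.coeff q := by
  set k := c + l q
  have hqk : q ∈ (part c l μ k).coeff.support := mem_support_part.2 ⟨hqμ, rfl⟩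
  have hlead : IsLeadingExp D (part c l μ k) (q - k • w + k • w) := by
    rw [sub_add_cancel]
    exact ⟨hqk, fun p hp => (eq_or_ne p q).elim (fun h => h ▸ le_rfl)
      fun hpq => (hq p (mem_support_part.1 hp).1 hpq).le⟩
  have hr := (hμ.isLeadingExp_part_iff hD hw k _).1 hlead
  have hcoeff := hμ.coeff_part_add_zsmul hD hw hw1 hr
  rwa [coeff_part_of_mem_support hlead.1, coeff_part_of_mem_support hr.1, sub_add_cancel,
    eq_comm] at hcoeff

lemma IsMutation.isStrictMaxOn_twist (hμ : IsMutation c l h f μ) (hD : Function.Injective D)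
    (hw : IsLeadingExp D h w) (hlw : l w = 0) {q : ℤ × ℤ}
    (hq : IsStrictMaxOn D μ.coeff.support q) :
    IsStrictMaxOn (D + D w • (Int.castAddHom ℝ).comp l.toAddMonoidHom) f.coeff.support
      (q - (c + l q) • w) := by
  intro p hp hpr
  set k := c + l p
  have hpk : p ∈ (part c l f k).coeff.support := mem_support_part.2 ⟨hp, rfl⟩
  obtain ⟨a, ha⟩ := exists_isLeadingExp (D := D) (f := part c l f k) fun h0 => by
    simp [h0] at hpk
  have hμa := (hμ.isLeadingExp_part_iff hD hw k a).2 ha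
  have hDa : D (a + k • w) = D a + k * D w := by rw [map_add, map_zsmul, zsmul_eq_mul]
  have hlevel : D p + k * D w < D q := by
    rcases eq_or_ne (a + k • w) q with haq | haq
    · have hk : k = c + l q := by
        rw [← haq, map_add, map_zsmul, hlw, smul_zero, add_zero, (mem_support_part.1 ha.1).2]
      have hpa : p ≠ a := fun hpa => hpr (by rw [← hk, ← haq, hpa, add_sub_cancel_right])
      linarith [ha.isStrictMaxOn hD p hpk hpa, haq ▸ hDa]
    · linarith [ha.2 p hpk, hDa ▸ hq _ (mem_support_part.1 hμa.1).1 haq]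
  have htwist : ∀ x, (D + D w • (Int.castAddHom ℝ).comp l.toAddMonoidHom) x = D x + D w * l x :=
    fun x => by simp
  rw [htwist, htwist, map_sub, map_zsmul, map_sub, map_zsmul, hlw, smul_zero, sub_zero,
    zsmul_eq_mul]
  push_cast [k] at hlevel ⊢
  linarith

end Mutation

theorem mutation_of_normalized_is_normalized_general
    (c : ℤ) (l : (ℤ × ℤ) →ₗ[ℤ] ℤ)
    (h : A2) (hh : h ≠ 0) (hker : ∀ p ∈ h.coeff.support, l p = 0) (hhn : IsNormalized h)
    (f : A2) (hfn : IsNormalized f)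
    (μ : A2)
    (hμpos : ∀ k : ℤ, 0 ≤ k → part c l μ k = h ^ k.toNat * part c l f k)
    (hμneg : ∀ k : ℤ, k < 0 → h ^ (-k).toNat * part c l μ k = part c l f k) :
    IsNormalized μ := by
  intro q hq
  obtain ⟨hqμ, D, hD, hDq⟩ := exists_injective_of_mem_extremePoints_convexHull_emb hq
  obtain ⟨w, hw⟩ := exists_isLeadingExp (D := D) hh
  have hw1 : h.coeff w = 1 := hhn.coeff_eq_one hw.1 (hw.isStrictMaxOn hD)
  have hμ : IsMutation c l h f μ := ⟨hμpos, hμneg⟩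
  have hr := hμ.coeff_sub_zsmul hD hw hw1 hqμ hDq
  have hr_mem : q - (c + l q) • w ∈ f.coeff.support := by
    rw [Finsupp.mem_support_iff, hr]
    exact Finsupp.mem_support_iff.1 hqμ
  rw [← hr]
  exact hfn.coeff_eq_one hr_mem (hμ.isStrictMaxOn_twist hD hw (hker w hw.1) hDq)

/-- The mutation of a normalized `(φ,h)`-mutable Laurent polynomial is
normalized, provided `h` is normalized. Here the affine-linear function is
`φ(p) = c + l(p)` with nonzero linear part `l`, `h` is supported on `ker l`,
`f` is `(φ,h)`-mutable, and `μ = mut_{(φ,h)} f` is characterized level by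
level: its level-`k` part is `h^k` times the level-`k` part of `f`. -/
theorem mutation_of_normalized_is_normalized
    (c : ℤ) (l : (ℤ × ℤ) →ₗ[ℤ] ℤ) (hl : l ≠ 0)
    (h : A2) (hh : h ≠ 0) (hker : ∀ p ∈ h.coeff.support, l p = 0) (hhn : IsNormalized h)
    (f : A2) (hfn : IsNormalized f)
    (hmut : ∀ k : ℤ, k < 0 → h ^ (-k).toNat ∣ part c l f k)
    (μ : A2)
    (hμpos : ∀ k : ℤ, 0 ≤ k → part c l μ k = h ^ k.toNat * part c l f k)
    (hμneg : ∀ k : ℤ, k < 0 → h ^ (-k).toNat * part c l μ k = part c l f k) :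
    IsNormalized μ :=
  mutation_of_normalized_is_normalized_general c l h hh hker hhn f hfn μ hμpos hμneg
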